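/- For every DC graph G on {1,...,N} and every (a,p) ∈ P^{2N}, the linear system S^G(a,p) has a unique solution (ζ_1,...,ζ_N) ∈ ℝ^N, and this solution is given by ζ_i = z_i^G(a,p) for every i ∈ {1,...,N}. -/

import Mathlib

open Filter Topology
open scoped Classical

noncomputable section

/-- The positive part `x₊ = max x 0` of a real number. -/
def pos' (x : ℝ) : ℝ := max x 0

/-- `qq p i = p 1 + ... + p i` (so `qq p 0 = 0`). -/
def qq (p : ℕ → ℝ) (i : ℕ) : ℝ := ∑ j ∈ Finset.Icc 1 i, p j

/-- `dpar a i = a i - a (i-1)`, with the convention `a 0 = 0`. -/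
def dpar (a : ℕ → ℝ) (i : ℕ) : ℝ := if i = 1 then a 1 else a i - a (i - 1)

/-- `(a, p)` is a parameter tuple in `P^{2N}`:
`0 < a 1 < a 2 < ... < a N` and `p 1, ..., p N > 0`. -/
def IsParam (N : ℕ) (a p : ℕ → ℝ) : Prop :=
  0 < a 1 ∧ (∀ i, 1 ≤ i → i < N → a i < a (i + 1)) ∧ (∀ i, 1 ≤ i → i ≤ N → 0 < p i)

/-- `s` is a stationary tuple for the parameters `(a, p)`:
`0 < s 1 < ... < s N` and `a i = ∑_{j=1}^N p j * (s i - s j + s 1)₊` for `1 ≤ i ≤ N`. -/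
def IsStationary' (N : ℕ) (a p s : ℕ → ℝ) : Prop :=
  0 < s 1 ∧ (∀ i, 1 ≤ i → i < N → s i < s (i + 1)) ∧
  ∀ i, 1 ≤ i → i ≤ N → a i = ∑ j ∈ Finset.Icc 1 N, p j * pos' (s i - s j + s 1)

/-- The inverse of (the restriction to `[0, ∞)` of) a function `y : ℝ → ℝ`. -/
def tinv (y : ℝ → ℝ) (x : ℝ) : ℝ := Function.invFunOn y (Set.Ici 0) x

/-- The right derivative of `y` at `t` (the derivative of `y` at `t` within `[t, ∞)`). -/
def rD (y : ℝ → ℝ) (t : ℝ) : ℝ := derivWithin y (Set.Ici t) t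

/-- The sequence `(y k)` satisfies recurrence (R).  The condition on the initial function `y 0`
(continuous, piecewise linear with at most `N` points of non-differentiability, vanishing at `0`,
with non-decreasing right derivative taking values in `{q 1, ..., q N}`) is encoded through its
canonical representation: such functions are exactly those of the form
`t ↦ ∑_{j=1}^N p j * (t - c j)₊` with `c` non-negative, non-decreasing and `c 1 = 0`. -/
def SatisfiesR (N : ℕ) (a p : ℕ → ℝ) (y : ℕ → ℝ → ℝ) : Prop :=
  (∃ c : ℕ → ℝ, c 1 = 0 ∧ (∀ j, 1 ≤ j → j ≤ N → 0 ≤ c j) ∧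
      (∀ j, 1 ≤ j → j < N → c j ≤ c (j + 1)) ∧
      ∀ t : ℝ, 0 ≤ t → y 0 t = ∑ j ∈ Finset.Icc 1 N, p j * pos' (t - c j)) ∧
  ∀ k : ℕ, ∀ t : ℝ, 0 ≤ t →
    y (k + 1) t = ∑ j ∈ Finset.Icc 1 N, p j * pos' (t - tinv (y k) (a j) + tinv (y k) (a 1))

/-- The breakpoints `c j` of the lower bounding trajectory `y₀⁻`:
`c 1 = 0` and `c j = d 1 / q 1 + ∑_{l=2}^j d l / q (l-1)` for `j ≥ 2`. -/
def cminus (a p : ℕ → ℝ) (j : ℕ) : ℝ :=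
  if j ≤ 1 then 0
  else a 1 / qq p 1 + ∑ l ∈ Finset.Icc 2 j, (a l - a (l - 1)) / qq p (l - 1)

/-- The lower bounding initial trajectory `y₀⁻`. -/
def yminus0 (N : ℕ) (a p : ℕ → ℝ) : ℝ → ℝ :=
  fun t => ∑ j ∈ Finset.Icc 1 N, p j * pos' (t - cminus a p j)

/-- The upper bounding initial trajectory `y₀⁺ : t ↦ q N * t`. -/
def yplus0 (N : ℕ) (p : ℕ → ℝ) : ℝ → ℝ := fun t => qq p N * t

/-- The sequence satisfying recurrence (R) with prescribed initial term `y0`. -/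
def iterR (N : ℕ) (a p : ℕ → ℝ) (y0 : ℝ → ℝ) : ℕ → ℝ → ℝ
  | 0 => y0
  | k + 1 => fun t =>
      ∑ j ∈ Finset.Icc 1 N,
        p j * pos' (t - tinv (iterR N a p y0 k) (a j) + tinv (iterR N a p y0 k) (a 1))

/-- `y` is a stationary trajectory: an increasing bijection of `[0,∞)` satisfying the
fixed-point equation of recurrence (R). -/
def IsStatTraj (N : ℕ) (a p : ℕ → ℝ) (y : ℝ → ℝ) : Prop :=
  StrictMonoOn y (Set.Ici 0) ∧ Set.BijOn y (Set.Ici 0) (Set.Ici 0) ∧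
  ∀ t : ℝ, 0 ≤ t → y t = ∑ j ∈ Finset.Icc 1 N, p j * pos' (t - tinv y (a j) + tinv y (a 1))

/-- `E_N`: the set of pairs `(i, j)` with `1 ≤ i < j ≤ N`. -/
def ENfin (N : ℕ) : Finset (ℕ × ℕ) :=
  (Finset.Icc 1 N ×ˢ Finset.Icc 1 N).filter fun e => e.1 < e.2

/-- `Nested e e'` means `e ≼_E e'`, i.e. `e` is nested in `e'`. -/
def Nested (e e' : ℕ × ℕ) : Prop := e'.1 ≤ e.1 ∧ e.1 < e.2 ∧ e.2 ≤ e'.2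

/-- `E` is the edge set of a downward closed graph on `{1, ..., N}`. -/
def IsDCGraph (N : ℕ) (E : Finset (ℕ × ℕ)) : Prop :=
  E ⊆ ENfin N ∧ ∀ e ∈ E, ∀ e' : ℕ × ℕ, Nested e' e → e' ∈ E

/-- `bG E i` is the greatest `j > i` with `(i, j) ∈ E`, and `i` if there is no such `j`;
by convention `bG E 0 = 1`. -/
def bG (E : Finset (ℕ × ℕ)) (i : ℕ) : ℕ :=
  if i = 0 then 1 else max i ((E.filter fun e => e.1 = i).sup fun e => e.2)

/-- `m(G)`: the maximal elements of `E` for `≼_E`. -/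
def maxE (E : Finset (ℕ × ℕ)) : Finset (ℕ × ℕ) :=
  E.filter fun e => ∀ e' ∈ E, Nested e e' → e' = e

/-- `M(G)`: the minimal elements of `E_N \ E` for `≼_E`. -/
def minNE (N : ℕ) (E : Finset (ℕ × ℕ)) : Finset (ℕ × ℕ) :=
  (ENfin N \ E).filter fun e => ∀ e' ∈ ENfin N \ E, Nested e' e → e' = e

/-- The map `T(G) : ℝ^N → ℝ^N`. -/
def TG (a p : ℕ → ℝ) (E : Finset (ℕ × ℕ)) (s : ℕ → ℝ) (i : ℕ) : ℝ :=
  (1 / qq p (bG E i)) * (a i + ∑ j ∈ Finset.Icc 1 (bG E i), p j * (s j - s 1))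

/-- The product of `γ` over the consecutive pairs (edges) of a list of vertices. -/
def pathProd (γ : ℕ → ℕ → ℝ) (l : List ℕ) : ℝ := (List.zipWith γ l l.tail).prod

/-- `Γ i j`: the sum, over all directed paths from `i` to `j` using edges of `E`, of the
product of `γ` over the edges of the path.  Since all edges of a DC graph increase, a directed
path from `i` to `j` is identified with the set `S ⊆ (i, j)` of its intermediate vertices,
subject to consecutive vertices being joined by edges of `E`. -/
def GammaPath (E : Finset (ℕ × ℕ)) (γ : ℕ → ℕ → ℝ) (i j : ℕ) : ℝ :=
  if i = j then 1
  else if i < j then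
    ∑ S ∈ (Finset.Ioo i j).powerset,
      if List.Chain' (fun u v => (u, v) ∈ E) (Finset.sort (insert i (insert j S)) (· ≤ ·))
      then pathProd γ (Finset.sort (insert i (insert j S)) (· ≤ ·)) else 0
  else 0

/-- The edge weight `γ^G_{i,j}`. -/
def gammaG (p : ℕ → ℝ) (E : Finset (ℕ × ℕ)) (i j : ℕ) : ℝ :=
  (qq p (bG E i) - qq p (max (j - 1) (bG E (i - 1)))) / qq p (bG E (i - 1))

/-- `Γ^G_{i,j}`. -/
def GammaG (p : ℕ → ℝ) (E : Finset (ℕ × ℕ)) (i j : ℕ) : ℝ := GammaPath E (gammaG p E) i j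

/-- `z_1^G (a, p)`. -/
def z1G (N : ℕ) (a p : ℕ → ℝ) (E : Finset (ℕ × ℕ)) : ℝ :=
  (∑ j ∈ Finset.Icc 1 N, GammaG p E 1 j * dpar a j / qq p (bG E (j - 1))) /
  (1 + ∑ j ∈ Finset.Icc 1 N,
      GammaG p E 1 j * (qq p (bG E j) - qq p (bG E (j - 1))) / qq p (bG E (j - 1)))

/-- `z_i^G (a, p)`. -/
def zG (N : ℕ) (a p : ℕ → ℝ) (E : Finset (ℕ × ℕ)) (i : ℕ) : ℝ :=
  if i = 1 then z1G N a p E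
  else
    (∑ j ∈ Finset.Icc i N, GammaG p E i j * dpar a j / qq p (bG E (j - 1))) -
      z1G N a p E *
        ∑ j ∈ Finset.Icc i N,
          GammaG p E i j * (qq p (bG E j) - qq p (bG E (j - 1))) / qq p (bG E (j - 1))

/-- `Z^G_{i,j} (a, p) = z_{i+1}^G + ... + z_j^G`. -/
def ZG (N : ℕ) (a p : ℕ → ℝ) (E : Finset (ℕ × ℕ)) (i j : ℕ) : ℝ :=
  ∑ l ∈ Finset.Icc (i + 1) j, zG N a p E l

/-- The DC graph `Gr(a, p)` read off from the stationary tuple `s = s(a, p)`: its edges are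
the pairs `(i, j) ∈ E_N` with `s 1 > s j - s i`. -/
def GrEdges (N : ℕ) (s : ℕ → ℝ) : Finset (ℕ × ℕ) :=
  (ENfin N).filter fun e => s e.2 - s e.1 < s 1

/-- `ζ` solves the linear system `S^G (a, p)`. -/
def SolvesS (N : ℕ) (a p : ℕ → ℝ) (E : Finset (ℕ × ℕ)) (ζ : ℕ → ℝ) : Prop :=
  ∀ i, 1 ≤ i → i ≤ N →
    a i = ∑ j ∈ Finset.Icc 1 (bG E i),
      p j * ((∑ l ∈ Finset.Icc 1 i, ζ l) - (∑ l ∈ Finset.Icc 1 j, ζ l) + ζ 1)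

/-- `P^{2N}`, viewed as a (cylinder) subset of the space of pairs of real sequences; only the
coordinates `a 1, ..., a N, p 1, ..., p N` are constrained. -/
def Pset (N : ℕ) : Set ((ℕ → ℝ) × (ℕ → ℝ)) := {ap | IsParam N ap.1 ap.2}

/-- The region `P_G = {(a, p) ∈ P^{2N} : Gr(a, p) = G}`. -/
def PGset (N : ℕ) (E : Finset (ℕ × ℕ)) : Set ((ℕ → ℝ) × (ℕ → ℝ)) :=
  {ap | IsParam N ap.1 ap.2 ∧ ∃ s : ℕ → ℝ, IsStationary' N ap.1 ap.2 s ∧ GrEdges N s = E}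

/-- The boundary of `P_G` relative to `P^{2N}`.  Since `P^{2N}` is open, the closure of `P_G`
relative to `P^{2N}` is `closure (PGset N E) ∩ Pset N` and its relative interior is
`interior (PGset N E)`. -/
def relBoundary (N : ℕ) (E : Finset (ℕ × ℕ)) : Set ((ℕ → ℝ) × (ℕ → ℝ)) :=
  (closure (PGset N E) ∩ Pset N) \ interior (PGset N E)

/-- The trajectory `y^{(m)}` built from a tuple `s`:
`t ↦ ∑_{j=1}^N p j * (t - s j + s 1)₊`. -/
def trajOfS (N : ℕ) (p s : ℕ → ℝ) : ℝ → ℝ :=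
  fun t => ∑ j ∈ Finset.Icc 1 N, p j * pos' (t - s j + s 1)

/-- The DC graph `G^{(m)}` associated with a tuple `s`: its edges are the `(i, j) ∈ E_N` with
`t^{(m)} (a i) - s j + s 1 > 0`, where `t^{(m)}` is the inverse of `trajOfS N p s`. -/
def GrFromS (N : ℕ) (a p s : ℕ → ℝ) : Finset (ℕ × ℕ) :=
  (ENfin N).filter fun e => 0 < tinv (trajOfS N p s) (a e.1) - s e.2 + s 1

end

/-!
Subtracting equation `i - 1` of `S^G(a, p)` from equation `i` (with `a_0 = 0` and an empty
equation `0`) and dividing by `q_{b(i-1)} > 0` turns the system into the triangular system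
`ζ_i = u_i(ζ_1) + ∑_{(i,l) ∈ E} γ_{i,l} ζ_l`, where
`u_i(w) = (d_i - w (q_{b(i)} - q_{b(i-1)})) / q_{b(i-1)}` (`forcingG`).
Splitting off the first edge of every path shows that the path sums `∑_j Γ_{i,j} u_j` obey the
same recursion, so by back substitution the system holds iff `ζ_i = ∑_j Γ_{i,j} u_j(ζ_1)` for all
`i`. At `i = 1` this is the linear equation `ζ_1 = A - ζ_1 B` with `B ≥ 0` (all weights are
nonnegative), whose unique root is `z_1 = A / (1 + B)`; substituting it gives `z_i`.
-/

open Finset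

lemma sort_insert_of_lt {α : Type*} [LinearOrder α] {a : α} {s : Finset α} (h : ∀ b ∈ s, a < b) :
    sort (insert a s) = a :: sort s :=
  sort_insert _ (fun b hb => (h b hb).le) fun ha => lt_irrefl a (h a ha)

section Paths

variable (E : Finset (ℕ × ℕ)) (γ : ℕ → ℕ → ℝ)

def edgeWeight (u v : ℕ) : ℝ := if (u, v) ∈ E then γ u v else 0

variable {γ}

lemma pathProd_cons_cons (u v : ℕ) (l : List ℕ) :
    pathProd γ (u :: v :: l) = γ u v * pathProd γ (v :: l) := by
  simp [pathProd]

lemma pathProd_nonneg (hγ : ∀ u v, 0 ≤ γ u v) : ∀ l : List ℕ, 0 ≤ pathProd γ l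
  | [] | [_] => by simp [pathProd]
  | u :: v :: l => by
    rw [pathProd_cons_cons]
    exact mul_nonneg (hγ u v) (pathProd_nonneg hγ (v :: l))

variable {E}

lemma pathProd_edgeWeight_of_isChain :
    ∀ {l : List ℕ}, l.IsChain (fun u v => (u, v) ∈ E) →
      pathProd (edgeWeight E γ) l = pathProd γ l
  | [], _ | [_], _ => by simp [pathProd]
  | u :: v :: l, h => by
    rw [List.isChain_cons_cons] at h
    rw [pathProd_cons_cons, pathProd_cons_cons, edgeWeight, if_pos h.1,
      pathProd_edgeWeight_of_isChain h.2]

lemma pathProd_edgeWeight_of_not_isChain :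
    ∀ {l : List ℕ}, ¬ l.IsChain (fun u v => (u, v) ∈ E) → pathProd (edgeWeight E γ) l = 0
  | [], h | [_], h => absurd (by simp) h
  | u :: v :: l, h => by
    rw [List.isChain_cons_cons, not_and_or] at h
    rw [pathProd_cons_cons, edgeWeight]
    rcases h with huv | hl
    · rw [if_neg huv, zero_mul]
    · rw [pathProd_edgeWeight_of_not_isChain hl, mul_zero]

variable (E γ)

lemma gammaPath_of_lt {i j : ℕ} (hij : i < j) :
    GammaPath E γ i j = ∑ S ∈ (Ioo i j).powerset,
      pathProd (edgeWeight E γ) (sort (insert i (insert j S))) := by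
  rw [GammaPath, if_neg hij.ne, if_pos hij]
  refine sum_congr rfl fun S _ => ?_
  split_ifs with h
  exacts [(pathProd_edgeWeight_of_isChain h).symm, (pathProd_edgeWeight_of_not_isChain h).symm]

lemma gammaPath_self (i : ℕ) : GammaPath E γ i i = 1 := if_pos rfl

lemma gammaPath_of_gt {i j : ℕ} (hji : j < i) : GammaPath E γ i j = 0 := by
  rw [GammaPath, if_neg (by omega), if_neg (by omega)]

/-- Paths from `i` to `j` whose second vertex exceeds `k`, grouped by that second vertex. -/
lemma sum_powerset_Ioo_pathProd {i j k : ℕ} (hik : i ≤ k) (hkj : k < j) :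
    ∑ S ∈ (Ioo k j).powerset, pathProd (edgeWeight E γ) (sort (insert i (insert j S))) =
      ∑ l ∈ Ioc k j, edgeWeight E γ i l * GammaPath E γ l j := by
  obtain ⟨n, rfl⟩ : ∃ n, j = k + n + 1 := ⟨j - k - 1, by omega⟩
  induction n generalizing k with
  | zero =>
    have hi : ∀ b ∈ ({k + 1} : Finset ℕ), i < b := fun b hb => by rw [mem_singleton.mp hb]; omega
    have hIoo : Ioo k (k + 0 + 1) = ∅ := by ext; simp
    have hIoc : Ioc k (k + 0 + 1) = {k + 1} := by ext; simp
    simp [hIoo, hIoc, sort_insert_of_lt hi, pathProd, gammaPath_self]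
  | succ n ih =>
    have hj : k + (n + 1) + 1 = k + 1 + n + 1 := by ring
    have hIoo : Ioo k (k + 1 + n + 1) = insert (k + 1) (Ioo (k + 1) (k + 1 + n + 1)) := by
      ext; simp only [mem_Ioo, mem_insert]; omega
    have hIoc : Ioc k (k + 1 + n + 1) = insert (k + 1) (Ioc (k + 1) (k + 1 + n + 1)) := by
      ext; simp only [mem_Ioc, mem_insert]; omega
    rw [hj, hIoo, sum_powerset_insert (by simp), ih (by omega) (by omega), hIoc,
      sum_insert (by simp), add_comm, gammaPath_of_lt E γ (by omega : k + 1 < k + 1 + n + 1),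
      mul_sum]
    congr 1
    refine sum_congr rfl fun S hS => ?_
    have hS : ∀ b ∈ S, k + 1 < b := fun b hb => (mem_Ioo.mp (mem_powerset.mp hS hb)).1
    have hk : ∀ b ∈ insert (k + 1 + n + 1) S, k + 1 < b := by
      simp only [mem_insert]; rintro b (rfl | hb) <;> [omega; exact hS b hb]
    rw [insert_comm _ (k + 1), sort_insert_of_lt (a := i), sort_insert_of_lt hk, pathProd_cons_cons]
    intro b hb
    rcases mem_insert.mp hb with rfl | hb
    · omega
    · have := hk b hb; omega

lemma gammaPath_eq_sum_edgeWeight_mul {i j : ℕ} (hij : i < j) :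
    GammaPath E γ i j = ∑ l ∈ Ioc i j, edgeWeight E γ i l * GammaPath E γ l j := by
  rw [gammaPath_of_lt E γ hij, sum_powerset_Ioo_pathProd E γ le_rfl hij]

lemma sum_gammaPath_mul_of_subset {s : Finset ℕ} {l N : ℕ} (u : ℕ → ℝ)
    (hs : Icc l N ⊆ s) (hsN : ∀ j ∈ s, j ≤ N) :
    ∑ j ∈ s, GammaPath E γ l j * u j = ∑ j ∈ Icc l N, GammaPath E γ l j * u j := by
  refine (sum_subset hs fun j hj hj' => ?_).symm
  rw [gammaPath_of_gt E γ, zero_mul]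
  have := hsN j hj
  simp only [mem_Icc, not_and_or] at hj'
  omega

lemma sum_gammaPath_mul_eq_add (u : ℕ → ℝ) {i N : ℕ} (hiN : i ≤ N) :
    ∑ j ∈ Icc i N, GammaPath E γ i j * u j =
      u i + ∑ l ∈ Ioc i N, edgeWeight E γ i l * ∑ j ∈ Icc l N, GammaPath E γ l j * u j := by
  rw [← Ioc_insert_left hiN, sum_insert left_notMem_Ioc, gammaPath_self, one_mul]
  congr 1
  calc ∑ j ∈ Ioc i N, GammaPath E γ i j * u j
      = ∑ j ∈ Ioc i N, ∑ l ∈ Ioc i N, edgeWeight E γ i l * (GammaPath E γ l j * u j) := by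
        refine sum_congr rfl fun j hj => ?_
        rw [mem_Ioc] at hj
        rw [gammaPath_eq_sum_edgeWeight_mul E γ hj.1, sum_mul]
        simp only [mul_assoc]
        refine sum_subset (Ioc_subset_Ioc_right hj.2) fun l hl hl' => ?_
        rw [gammaPath_of_gt E γ, zero_mul, mul_zero]
        simp only [mem_Ioc, not_and_or] at hl hl'
        omega
    _ = ∑ l ∈ Ioc i N, edgeWeight E γ i l * ∑ j ∈ Icc l N, GammaPath E γ l j * u j := by
        rw [sum_comm]
        refine sum_congr rfl fun l hl => ?_
        rw [mem_Ioc] at hl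
        rw [← mul_sum, sum_gammaPath_mul_of_subset E γ u
          ((Icc_subset_Ioc_iff hl.2).mpr ⟨hl.1, le_rfl⟩) fun j hj => (mem_Ioc.mp hj).2]

lemma eq_add_sum_iff_eq_sum_gammaPath (u x : ℕ → ℝ) {i N : ℕ} (hiN : i ≤ N)
    (hx : ∀ l ∈ Ioc i N, x l = ∑ j ∈ Icc l N, GammaPath E γ l j * u j) :
    x i = u i + ∑ l ∈ Ioc i N, edgeWeight E γ i l * x l ↔
      x i = ∑ j ∈ Icc i N, GammaPath E γ i j * u j := by
  rw [sum_gammaPath_mul_eq_add E γ u hiN, sum_congr rfl fun l hl => by rw [hx l hl]]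

lemma forall_eq_add_iff_forall_eq_sum_gammaPath (u x : ℕ → ℝ) (m N : ℕ) :
    (∀ i, m ≤ i → i ≤ N → x i = u i + ∑ l ∈ Ioc i N, edgeWeight E γ i l * x l) ↔
      ∀ i, m ≤ i → i ≤ N → x i = ∑ j ∈ Icc i N, GammaPath E γ i j * u j := by
  constructor
  · intro h i hmi hiN
    induction hn : N - i using Nat.strong_induction_on generalizing i with
    | _ n ih =>
      refine (eq_add_sum_iff_eq_sum_gammaPath E γ u x hiN fun l hl => ?_).mp (h i hmi hiN)
      rw [mem_Ioc] at hl
      exact ih (N - l) (by omega) l (by omega) hl.2 rfl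
  · intro h i hmi hiN
    refine (eq_add_sum_iff_eq_sum_gammaPath E γ u x hiN fun l hl => ?_).mpr (h i hmi hiN)
    rw [mem_Ioc] at hl
    exact h l (by omega) hl.2

lemma gammaPath_nonneg {E : Finset (ℕ × ℕ)} {γ : ℕ → ℕ → ℝ}
    (hγ : ∀ u v, (u, v) ∈ E → 0 ≤ γ u v) (i j : ℕ) : 0 ≤ GammaPath E γ i j := by
  have hw : ∀ u v, 0 ≤ edgeWeight E γ u v := fun u v => by
    unfold edgeWeight; split_ifs with h; exacts [hγ u v h, le_rfl]
  rcases lt_trichotomy i j with hij | rfl | hji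
  · rw [gammaPath_of_lt E γ hij]
    exact sum_nonneg fun _ _ => pathProd_nonneg hw _
  · rw [gammaPath_self]; exact zero_le_one
  · rw [gammaPath_of_gt E γ hji]

end Paths

lemma sum_Icc_one_sub_sum_Icc_one {M : Type*} [AddCommGroup M] (f : ℕ → M) {m n : ℕ}
    (hmn : m ≤ n) : ∑ j ∈ Icc 1 n, f j - ∑ j ∈ Icc 1 m, f j = ∑ j ∈ Ioc m n, f j := by
  have h := sum_Ioc_consecutive f (Nat.zero_le m) hmn
  rw [← Icc_add_one_left_eq_Ioc 0 m, ← Icc_add_one_left_eq_Ioc 0 n, zero_add] at h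
  exact sub_eq_of_eq_add' h.symm

lemma qq_sub (p : ℕ → ℝ) {m n : ℕ} (hmn : m ≤ n) : qq p n - qq p m = ∑ j ∈ Ioc m n, p j :=
  sum_Icc_one_sub_sum_Icc_one p hmn

section Positive

variable {N : ℕ} {p : ℕ → ℝ}

lemma qq_mono (hp : ∀ i, 1 ≤ i → i ≤ N → 0 ≤ p i) {m n : ℕ} (hmn : m ≤ n) (hnN : n ≤ N) :
    qq p m ≤ qq p n := by
  rw [← sub_nonneg, qq_sub p hmn]
  exact sum_nonneg fun j hj => by rw [mem_Ioc] at hj; exact hp j (by omega) (by omega)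

lemma qq_nonneg (hp : ∀ i, 1 ≤ i → i ≤ N → 0 ≤ p i) {m : ℕ} (hmN : m ≤ N) : 0 ≤ qq p m :=
  sum_nonneg fun j hj => by rw [mem_Icc] at hj; exact hp j hj.1 (by omega)

lemma qq_pos (hp : ∀ i, 1 ≤ i → i ≤ N → 0 < p i) {m : ℕ} (hm : 1 ≤ m) (hmN : m ≤ N) :
    0 < qq p m :=
  sum_pos (fun j hj => by rw [mem_Icc] at hj; exact hp j hj.1 (by omega)) ⟨1, by simp [hm]⟩

end Positive

lemma mem_ENfin {N : ℕ} {e : ℕ × ℕ} : e ∈ ENfin N ↔ 1 ≤ e.1 ∧ e.1 < e.2 ∧ e.2 ≤ N := by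
  rw [ENfin, mem_filter, mem_product, mem_Icc, mem_Icc]
  omega

section bG

variable {N : ℕ} {E : Finset (ℕ × ℕ)}

lemma bG_zero (E : Finset (ℕ × ℕ)) : bG E 0 = 1 := if_pos rfl

lemma self_le_bG (E : Finset (ℕ × ℕ)) (i : ℕ) : i ≤ bG E i := by
  unfold bG
  split_ifs with hi
  exacts [by omega, le_max_left _ _]

lemma one_le_bG (E : Finset (ℕ × ℕ)) (i : ℕ) : 1 ≤ bG E i := by
  rcases Nat.eq_zero_or_pos i with rfl | hi
  exacts [(bG_zero E).ge, hi.trans_le (self_le_bG E i)]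

lemma le_bG_iff {i l : ℕ} (hi : 1 ≤ i) (hil : i < l) :
    l ≤ bG E i ↔ ∃ e ∈ E, e.1 = i ∧ l ≤ e.2 := by
  rw [bG, if_neg (by omega), le_max_iff, Finset.le_sup_iff (bot_le.trans_lt hil)]
  simp [not_le.mpr hil, and_assoc]

lemma bG_le (hE : E ⊆ ENfin N) {i : ℕ} (hi : 1 ≤ i) (hiN : i ≤ N) : bG E i ≤ N := by
  rw [bG, if_neg (by omega)]
  exact max_le hiN (Finset.sup_le fun e he => (mem_ENfin.mp (hE (mem_filter.mp he).1)).2.2)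

lemma mem_iff_lt_le_bG (hE : IsDCGraph N E) {i l : ℕ} (hi : 1 ≤ i) :
    (i, l) ∈ E ↔ i < l ∧ l ≤ bG E i := by
  constructor
  · intro h
    have hil := (mem_ENfin.mp (hE.1 h)).2.1
    exact ⟨hil, (le_bG_iff hi hil).mpr ⟨(i, l), h, rfl, le_rfl⟩⟩
  · rintro ⟨hil, hl⟩
    obtain ⟨e, he, rfl, hle⟩ := (le_bG_iff hi hil).mp hl
    exact hE.2 e he _ ⟨le_rfl, hil, hle⟩

lemma bG_monotone (hE : IsDCGraph N E) : Monotone (bG E) := by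
  refine monotone_nat_of_le_succ fun i => ?_
  rcases Nat.eq_zero_or_pos i with rfl | hi
  · exact (bG_zero E).trans_le (one_le_bG E 1)
  by_cases hb : bG E i ≤ i + 1
  · exact hb.trans (self_le_bG E _)
  have hedge : (i, bG E i) ∈ E := (mem_iff_lt_le_bG hE hi).mpr ⟨by omega, le_rfl⟩
  have hedge' : (i + 1, bG E i) ∈ E := hE.2 _ hedge _ ⟨by omega, by omega, le_rfl⟩
  exact ((mem_iff_lt_le_bG hE (by omega)).mp hedge').2

end bG

/-- The right-hand side of equation `i` of `S^G(a, p)` is `rhsS p ζ i (bG E i)`. -/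
def rhsS (p ζ : ℕ → ℝ) (i m : ℕ) : ℝ :=
  ∑ j ∈ Icc 1 m, p j * ((∑ l ∈ Icc 1 i, ζ l) - (∑ l ∈ Icc 1 j, ζ l) + ζ 1)

lemma rhsS_zero_one (p ζ : ℕ → ℝ) : rhsS p ζ 0 1 = 0 := by
  simp [rhsS]

lemma rhsS_succ_sub (p ζ : ℕ → ℝ) {k B' B : ℕ} (hkB' : k ≤ B') (hB : B' ≤ B) :
    rhsS p ζ (k + 1) B - rhsS p ζ k B' =
      qq p B' * ζ (k + 1) + (qq p B - qq p B') * ζ 1 -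
        ∑ l ∈ Icc (k + 1 + 1) B, (qq p B - qq p (max (l - 1) B')) * ζ l := by
  set Z : ℕ → ℝ := fun n => ∑ l ∈ Icc 1 n, ζ l
  have hsplit : rhsS p ζ (k + 1) B = ∑ j ∈ Icc 1 B', p j * (Z (k + 1) - Z j + ζ 1) +
      ∑ j ∈ Ioc B' B, p j * (Z (k + 1) - Z j + ζ 1) := by
    rw [rhsS, ← sum_Icc_one_sub_sum_Icc_one _ hB]
    ring
  have hlow : ∑ j ∈ Icc 1 B', p j * (Z (k + 1) - Z j + ζ 1) - rhsS p ζ k B' =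
      qq p B' * ζ (k + 1) := by
    have hZk : Z (k + 1) = Z k + ζ (k + 1) := sum_Icc_succ_top (by omega) ζ
    rw [rhsS, ← sum_sub_distrib, qq, sum_mul]
    exact sum_congr rfl fun j _ => by rw [hZk]; ring
  have hhigh : ∑ j ∈ Ioc B' B, p j * (Z (k + 1) - Z j + ζ 1) =
      (qq p B - qq p B') * ζ 1 - ∑ j ∈ Ioc B' B, ∑ l ∈ Ioc (k + 1) j, p j * ζ l := by
    rw [qq_sub p hB, sum_mul, ← sum_sub_distrib]
    refine sum_congr rfl fun j hj => ?_
    rw [mem_Ioc] at hj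
    rw [← mul_sum, ← sum_Icc_one_sub_sum_Icc_one ζ (by omega : k + 1 ≤ j)]
    ring
  have hswap : ∑ j ∈ Ioc B' B, ∑ l ∈ Ioc (k + 1) j, p j * ζ l =
      ∑ l ∈ Icc (k + 1 + 1) B, (qq p B - qq p (max (l - 1) B')) * ζ l := by
    rw [sum_comm' (s' := fun l => Ioc (max (l - 1) B') B) (t' := Icc (k + 1 + 1) B)
      fun j l => by simp only [mem_Ioc, mem_Icc]; omega]
    refine sum_congr rfl fun l hl => ?_
    rw [mem_Icc] at hl
    rw [← sum_mul, qq_sub p (by omega)]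
  rw [hsplit, ← hswap]
  linarith

lemma forall_eq_iff_forall_dpar_eq (a f : ℕ → ℝ) (hf : f 0 = 0) (N : ℕ) :
    (∀ i, 1 ≤ i → i ≤ N → a i = f i) ↔ ∀ i, 1 ≤ i → i ≤ N → dpar a i = f i - f (i - 1) := by
  constructor
  · intro h i h1 hiN
    rcases h1.eq_or_lt with rfl | h1
    · rw [dpar, if_pos rfl, h 1 le_rfl hiN, Nat.sub_self, hf, sub_zero]
    · rw [dpar, if_neg h1.ne', h i h1.le hiN, h (i - 1) (by omega) (by omega)]
  · intro h i h1
    induction i, h1 using Nat.le_induction with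
    | base =>
      intro h1N
      simpa [dpar, hf] using h 1 le_rfl h1N
    | succ k hk ih =>
      intro hkN
      have hk1 := h (k + 1) (by omega) hkN
      rw [dpar, if_neg (by omega), Nat.add_sub_cancel] at hk1
      linarith [ih (by omega)]

lemma eq_div_add_sum_div_iff {Q d D w z : ℝ} {s : Finset ℕ} {c ζ : ℕ → ℝ} (hQ : Q ≠ 0) :
    z = (d - w * D) / Q + ∑ l ∈ s, c l / Q * ζ l ↔ d = Q * z + D * w - ∑ l ∈ s, c l * ζ l := by
  rw [sum_congr rfl fun l _ => div_mul_eq_mul_div (c l) Q (ζ l), ← sum_div, ← add_div,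
    eq_div_iff hQ]
  constructor <;> intro h <;> linarith

noncomputable def forcingG (a p : ℕ → ℝ) (E : Finset (ℕ × ℕ)) (w : ℝ) (i : ℕ) : ℝ :=
  (dpar a i - w * (qq p (bG E i) - qq p (bG E (i - 1)))) / qq p (bG E (i - 1))

section System

variable {N : ℕ} {a p : ℕ → ℝ} {E : Finset (ℕ × ℕ)}

lemma qq_bG_pred_pos (hp : ∀ i, 1 ≤ i → i ≤ N → 0 < p i) (hE : IsDCGraph N E) {i : ℕ}
    (hi : 1 ≤ i) (hiN : i ≤ N) : 0 < qq p (bG E (i - 1)) :=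
  qq_pos hp (one_le_bG E _) ((bG_monotone hE (Nat.sub_le i 1)).trans (bG_le hE.1 hi hiN))

lemma solvesS_iff_forall_eq_forcingG_add (hp : ∀ i, 1 ≤ i → i ≤ N → 0 < p i)
    (hE : IsDCGraph N E) (ζ : ℕ → ℝ) :
    SolvesS N a p E ζ ↔ ∀ i, 1 ≤ i → i ≤ N →
      ζ i = forcingG a p E (ζ 1) i + ∑ l ∈ Icc (i + 1) (bG E i), gammaG p E i l * ζ l := by
  have h0 : rhsS p ζ 0 (bG E 0) = 0 := by rw [bG_zero, rhsS_zero_one]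
  refine (forall_eq_iff_forall_dpar_eq a (fun i => rhsS p ζ i (bG E i)) h0 N).trans
    (forall_congr' fun i => forall_congr' fun h1 => forall_congr' fun hiN => ?_)
  have hQ := qq_bG_pred_pos hp hE h1 hiN
  obtain ⟨k, rfl⟩ : ∃ k, i = k + 1 := ⟨i - 1, by omega⟩
  simp only [forcingG, gammaG, Nat.add_sub_cancel] at hQ ⊢
  rw [eq_div_add_sum_div_iff hQ.ne',
    rhsS_succ_sub p ζ (self_le_bG E k) (bG_monotone hE k.le_succ)]

lemma sum_edgeWeight_mul_eq_sum_Icc_bG (hE : IsDCGraph N E) (γ : ℕ → ℕ → ℝ) (x : ℕ → ℝ) {i : ℕ}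
    (hi : 1 ≤ i) (hiN : i ≤ N) :
    ∑ l ∈ Ioc i N, edgeWeight E γ i l * x l = ∑ l ∈ Icc (i + 1) (bG E i), γ i l * x l := by
  simp only [edgeWeight, ite_mul, zero_mul]
  rw [← sum_filter]
  congr 1
  ext l
  have := bG_le hE.1 hi hiN
  simp only [mem_filter, mem_Ioc, mem_Icc, mem_iff_lt_le_bG hE hi]
  omega

lemma solvesS_iff_forall_eq_sum_GammaG (hp : ∀ i, 1 ≤ i → i ≤ N → 0 < p i)
    (hE : IsDCGraph N E) (ζ : ℕ → ℝ) :
    SolvesS N a p E ζ ↔ ∀ i, 1 ≤ i → i ≤ N →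
      ζ i = ∑ j ∈ Icc i N, GammaG p E i j * forcingG a p E (ζ 1) j := by
  refine (solvesS_iff_forall_eq_forcingG_add hp hE ζ).trans (Iff.trans ?_
    (forall_eq_add_iff_forall_eq_sum_gammaPath E (gammaG p E) (forcingG a p E (ζ 1)) ζ 1 N))
  refine forall_congr' fun i => forall_congr' fun hi => forall_congr' fun hiN => ?_
  rw [sum_edgeWeight_mul_eq_sum_Icc_bG hE _ _ hi hiN]

lemma gammaG_nonneg (hp : ∀ i, 1 ≤ i → i ≤ N → 0 ≤ p i) (hE : IsDCGraph N E) {u v : ℕ}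
    (huv : (u, v) ∈ E) : 0 ≤ gammaG p E u v := by
  obtain ⟨hu, huv', hvN⟩ : 1 ≤ u ∧ u < v ∧ v ≤ N := mem_ENfin.mp (hE.1 huv)
  have hvb := ((mem_iff_lt_le_bG hE hu).mp huv).2
  have hbN := bG_le hE.1 hu (by omega)
  have hmono := bG_monotone hE (Nat.sub_le u 1)
  exact div_nonneg (sub_nonneg.mpr (qq_mono hp (max_le (by omega) hmono) hbN))
    (qq_nonneg hp (hmono.trans hbN))

lemma one_add_sum_GammaG_pos (hp : ∀ i, 1 ≤ i → i ≤ N → 0 < p i) (hE : IsDCGraph N E) :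
    0 < 1 + ∑ j ∈ Icc 1 N,
      GammaG p E 1 j * (qq p (bG E j) - qq p (bG E (j - 1))) / qq p (bG E (j - 1)) := by
  have hp' : ∀ i, 1 ≤ i → i ≤ N → 0 ≤ p i := fun i h1 h2 => (hp i h1 h2).le
  refine add_pos_of_pos_of_nonneg one_pos (sum_nonneg fun j hj => ?_)
  rw [mem_Icc] at hj
  have hmono := bG_monotone hE (Nat.sub_le j 1)
  have hbN := bG_le hE.1 hj.1 hj.2
  exact div_nonneg
    (mul_nonneg (gammaPath_nonneg (fun _ _ => gammaG_nonneg hp' hE) _ _)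
      (sub_nonneg.mpr (qq_mono hp' hmono hbN)))
    (qq_nonneg hp' (hmono.trans hbN))

lemma sum_GammaG_mul_forcingG (N : ℕ) (a p : ℕ → ℝ) (E : Finset (ℕ × ℕ)) (w : ℝ) (i : ℕ) :
    ∑ j ∈ Icc i N, GammaG p E i j * forcingG a p E w j =
      ∑ j ∈ Icc i N, GammaG p E i j * dpar a j / qq p (bG E (j - 1)) -
        w * ∑ j ∈ Icc i N,
          GammaG p E i j * (qq p (bG E j) - qq p (bG E (j - 1))) / qq p (bG E (j - 1)) := by
  rw [mul_sum, ← sum_sub_distrib]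
  exact sum_congr rfl fun j _ => by rw [forcingG]; ring

lemma eq_sum_GammaG_mul_forcingG_iff (hp : ∀ i, 1 ≤ i → i ≤ N → 0 < p i)
    (hE : IsDCGraph N E) (w : ℝ) :
    w = ∑ j ∈ Icc 1 N, GammaG p E 1 j * forcingG a p E w j ↔ w = z1G N a p E := by
  rw [sum_GammaG_mul_forcingG, z1G, eq_div_iff (one_add_sum_GammaG_pos hp hE).ne']
  constructor <;> intro h <;> linear_combination h

lemma zG_one (N : ℕ) (a p : ℕ → ℝ) (E : Finset (ℕ × ℕ)) : zG N a p E 1 = z1G N a p E :=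
  if_pos rfl

lemma zG_eq_sum_GammaG_mul_forcingG (hp : ∀ i, 1 ≤ i → i ≤ N → 0 < p i) (hE : IsDCGraph N E)
    {i : ℕ} (hi : 1 ≤ i) :
    zG N a p E i = ∑ j ∈ Icc i N, GammaG p E i j * forcingG a p E (z1G N a p E) j := by
  rcases hi.eq_or_lt with rfl | hi
  · rw [zG_one]
    exact (eq_sum_GammaG_mul_forcingG_iff hp hE _).mpr rfl
  · rw [zG, if_neg hi.ne', sum_GammaG_mul_forcingG]

end System

theorem stmt_8_general (N : ℕ) (a p : ℕ → ℝ) (hap : IsParam N a p)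
    (E : Finset (ℕ × ℕ)) (hE : IsDCGraph N E) :
    SolvesS N a p E (zG N a p E) ∧
    ∀ ζ : ℕ → ℝ, SolvesS N a p E ζ → ∀ i, 1 ≤ i → i ≤ N → ζ i = zG N a p E i := by
  have hp := hap.2.2
  refine ⟨(solvesS_iff_forall_eq_sum_GammaG hp hE _).mpr fun i hi _ => ?_, fun ζ hζ i hi hiN => ?_⟩
  · rw [zG_one]
    exact zG_eq_sum_GammaG_mul_forcingG hp hE hi
  · have h := (solvesS_iff_forall_eq_sum_GammaG hp hE ζ).mp hζ
    have hζ1 : ζ 1 = z1G N a p E :=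
      (eq_sum_GammaG_mul_forcingG_iff hp hE _).mp (h 1 le_rfl (hi.trans hiN))
    rw [h i hi hiN, hζ1, zG_eq_sum_GammaG_mul_forcingG hp hE hi]

/-- unique solution of the linear system `S^G(a,p)`, Theorem 4.4. -/
theorem stmt_8 (N : ℕ) (hN : 1 ≤ N) (a p : ℕ → ℝ) (hap : IsParam N a p)
    (E : Finset (ℕ × ℕ)) (hE : IsDCGraph N E) :
    SolvesS N a p E (zG N a p E) ∧
    ∀ ζ : ℕ → ℝ, SolvesS N a p E ζ → ∀ i, 1 ≤ i → i ≤ N → ζ i = zG N a p E i :=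
  stmt_8_general N a p hap E hE
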